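/- Fix an integer g ≥ 2, set L = cos(π/(g+1)), and for c > 0 let s(c) = 2·arsinh(L/sinh(c/2)). Let c₀ = 2·arsinh(√L), which is the unique positive solution of ℓ_α(c,0) = 2c. Then for every c ≥ c₀ there exists a unique u ∈ [0,1) such that ℓ_α(c, c·u) = 2c. -/

import Mathlib

/-! Since `arcosh` is injective on `[1, ∞)` and `2c = 4·arcosh(cosh(c/2))`, the equation
`ℓ_α(c, cu) = 2c` says `cosh(s(c)/2)·cosh(cu/2) = cosh(c/2)`, which is solved explicitly by
`cu/2 = arcosh(cosh(c/2) / cosh(s(c)/2))`. This lies in `[0, c/2)` because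
`0 < s(c) ≤ c`, and `s(c) ≤ c` is exactly `L ≤ sinh²(c/2)`, i.e. `c ≥ c₀`. -/

/-- Inverse hyperbolic cosine (for `x ≥ 1`). -/
noncomputable def arcosh (x : ℝ) : ℝ := Real.log (x + Real.sqrt (x ^ 2 - 1))

/-- The seam length `s(c) = 2·arsinh(L / sinh(c/2))`, so that
`sinh(c/2)·sinh(s(c)/2) = L`. -/
noncomputable def seam (L c : ℝ) : ℝ := 2 * Real.arsinh (L / Real.sinh (c / 2))

/-- The length `ℓ_α(c,t) = 4·arcosh(cosh(s(c)/2)·cosh(t/2))`. -/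
noncomputable def ellAlpha (L c t : ℝ) : ℝ :=
  4 * arcosh (Real.cosh (seam L c / 2) * Real.cosh (t / 2))

open Real hiding arcosh
open Set

lemma arcosh_eq_real_arcosh : arcosh = Real.arcosh := rfl

lemma cos_pi_div_pos {x : ℝ} (hx : 2 < x) : 0 < cos (π / x) := by
  apply cos_pos_of_mem_Ioo
  constructor
  · linarith [pi_pos, div_pos pi_pos (by linarith : (0 : ℝ) < x)]
  · exact div_lt_div_of_pos_left pi_pos two_pos hx

lemma sq_le_sinh_sq_half {a c : ℝ} (ha : 0 ≤ a) (hc : 2 * arsinh a ≤ c) :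
    a ^ 2 ≤ sinh (c / 2) ^ 2 := by
  have : a ≤ sinh (c / 2) := by
    simpa only [sinh_arsinh] using sinh_le_sinh.2 (show arsinh a ≤ c / 2 by linarith)
  exact pow_le_pow_left₀ ha this 2

lemma seam_pos {L c : ℝ} (hL : 0 < L) (hc : 0 < c) : 0 < seam L c := by
  have : 0 < L / sinh (c / 2) := div_pos hL (sinh_pos_iff.2 (half_pos hc))
  unfold seam
  linarith [arsinh_pos_iff.2 this]

lemma seam_le_self {L c : ℝ} (hc : 0 < c) (h : L ≤ sinh (c / 2) ^ 2) : seam L c ≤ c := by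
  have hsinh : 0 < sinh (c / 2) := sinh_pos_iff.2 (half_pos hc)
  have : arsinh (L / sinh (c / 2)) ≤ c / 2 := calc
    arsinh (L / sinh (c / 2)) ≤ arsinh (sinh (c / 2)) :=
      arsinh_le_arsinh.2 (by rwa [div_le_iff₀ hsinh, ← sq])
    _ = c / 2 := arsinh_sinh _
  unfold seam
  linarith

lemma ellAlpha_eq_two_mul_iff {L c t : ℝ} (hc : 0 ≤ c) :
    ellAlpha L c t = 2 * c ↔ cosh (seam L c / 2) * cosh (t / 2) = cosh (c / 2) := by
  have h2c : 2 * c = 4 * Real.arcosh (cosh (c / 2)) := by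
    rw [Real.arcosh_cosh (by linarith)]
    ring
  have hprod : 1 ≤ cosh (seam L c / 2) * cosh (t / 2) :=
    one_le_mul_of_one_le_of_one_le (one_le_cosh _) (one_le_cosh _)
  rw [ellAlpha, h2c, arcosh_eq_real_arcosh, mul_right_inj' four_ne_zero]
  exact arcosh_injOn.eq_iff hprod (one_le_cosh _)

lemma existsUnique_mem_Ico_cosh_mul_cosh_mul_eq {s c : ℝ} (hs : 0 < s) (hsc : s ≤ c) :
    ∃! u ∈ Ico (0 : ℝ) 1, cosh s * cosh (c * u) = cosh c := by
  have hc : 0 < c := hs.trans_le hsc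
  have hcosh_s : 0 < cosh s := cosh_pos s
  have hratio : 1 ≤ cosh c / cosh s := by
    rwa [one_le_div hcosh_s, cosh_le_cosh, abs_of_pos hs, abs_of_pos hc]
  set y := Real.arcosh (cosh c / cosh s)
  have hy_nonneg : 0 ≤ y / c := div_nonneg (arcosh_nonneg hratio) hc.le
  have hy_lt : y < c := by
    have : cosh c / cosh s < cosh c :=
      div_lt_self (cosh_pos c) (one_lt_cosh.2 hs.ne')
    simpa only [Real.arcosh_cosh hc.le] using
      (arcosh_lt_arcosh (by linarith) (cosh_pos c)).2 this
  have hsolve : ∀ u, 0 ≤ u → (cosh s * cosh (c * u) = cosh c ↔ c * u = y) := by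
    intro u hu
    rw [mul_comm (cosh s), ← eq_div_iff hcosh_s.ne']
    constructor
    · intro h
      rw [← Real.arcosh_cosh (by positivity : 0 ≤ c * u), h]
    · intro h
      rw [h, cosh_arcosh hratio]
  refine ⟨y / c, ⟨⟨?_, ?_⟩, ?_⟩, ?_⟩
  · exact hy_nonneg
  · rwa [div_lt_one hc]
  · rw [hsolve _ hy_nonneg, mul_div_cancel₀ _ hc.ne']
  · rintro v ⟨hv, hveq⟩
    rw [eq_div_iff hc.ne', mul_comm, ← hsolve v hv.1]
    exact hveq

/-- Fix an integer `g ≥ 2`, set `L = cos(π/(g+1))`, and for `c > 0` let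
`s(c) = 2·arsinh(L/sinh(c/2))`. Let `c₀ = 2·arsinh(√L)`, which is the unique positive
solution of `ℓ_α(c,0) = 2c`. Then for every `c ≥ c₀` there exists a unique `u ∈ [0,1)`
such that `ℓ_α(c, c·u) = 2c`. -/
theorem exists_unique_u0 (g : ℕ) (hg : 2 ≤ g) (L : ℝ)
    (hL : L = Real.cos (Real.pi / (g + 1)))
    (c₀ : ℝ) (hc₀ : c₀ = 2 * Real.arsinh (Real.sqrt L)) :
    ∀ c : ℝ, c₀ ≤ c →
      ∃! u : ℝ, u ∈ Set.Ico (0 : ℝ) 1 ∧ ellAlpha L c (c * u) = 2 * c := by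
  have hLpos : 0 < L := hL ▸ cos_pi_div_pos (by norm_cast; omega)
  intro c hc
  have hcpos : 0 < c := by
    have : 0 < arsinh √L := arsinh_pos_iff.2 (sqrt_pos.2 hLpos)
    linarith
  have hLc : L ≤ sinh (c / 2) ^ 2 := by
    simpa only [sq_sqrt hLpos.le] using sq_le_sinh_sq_half (sqrt_nonneg L) (hc₀ ▸ hc)
  simp_rw [ellAlpha_eq_two_mul_iff hcpos.le, mul_div_right_comm c]
  exact existsUnique_mem_Ico_cosh_mul_cosh_mul_eq (half_pos (seam_pos hLpos hcpos))
    (by linarith [seam_le_self hcpos hLc])
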